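/- arXiv:1902.08751 — 4 statements merged into one kernel-verified Lean document; each statement's English description precedes it below -/
import Mathlib

section
/- Let α > 0, θ = arctan α, t ∈ (0, π/(2α)), and P, Q ∈ ℝ. Define the function Φ(x,p) = π^{-1/2} |sin θ / sin(θ+αt)|^{1/2} · exp(-iP(x-Q)) · exp( ( -cos θ sin(αt)(p-P)² - sin θ cos(αt)(x-Q)² - 2i cos θ sin(αt)(x-Q)(p-P) ) / (2 sin(αt+θ)) ). Then ∫_{ℝ²} |Φ(x,p)|² · √(sin(2αt)/(2α)) dx dp = 1. -/
open Real MeasureTheory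

/-- The transformed coherent state `U_τ ψ_{(P,Q)}` for the hyperbolic
Hamiltonian `H = (1/2)(p² - α²x²)`, with `θ = arctan α`, `τ = it`. -/
noncomputable def KSHstate (α t P Q : ℝ) (x p : ℝ) : ℂ :=
  (Real.pi : ℂ) ^ (-(1/2 : ℂ)) *
    ((|Real.sin (Real.arctan α) / Real.sin (Real.arctan α + α * t)| ^ ((1:ℝ)/2) : ℝ) : ℂ) *
    Complex.exp (-Complex.I * P * (x - Q)) *
    Complex.exp
      ((-(Real.cos (Real.arctan α) * Real.sin (α * t) : ℂ) * ((p : ℂ) - P) ^ 2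
          - (Real.sin (Real.arctan α) * Real.cos (α * t) : ℂ) * ((x : ℂ) - Q) ^ 2
          - 2 * Complex.I * (Real.cos (Real.arctan α) * Real.sin (α * t) : ℂ)
              * ((x : ℂ) - Q) * ((p : ℂ) - P))
        / (2 * (Real.sin (α * t + Real.arctan α) : ℂ)))


/-! The two phase factors of `KSHstate` have modulus one, so `|Φ|²` is the product of two
Gaussians in `x - Q` and `p - P` with coefficients `B / S` and `A / S`, where
`S = sin (αt + θ)`, `A = cos θ sin αt`, `B = sin θ cos αt`. Its integral is therefore
`(sin θ / S) / π · π S / √(A B) = sin θ / √(A B)`. Since `tan θ = α`,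
`A B = sin² θ · sin αt cos αt / α`, so `√(A B) = sin θ · √(sin 2αt / 2α)` and the half-form
factor cancels it exactly. -/

lemma integral_gaussian_sub (b c : ℝ) : ∫ x : ℝ, exp (-b * (x - c) ^ 2) = √(π / b) :=
  (integral_sub_right_eq_self (fun y ↦ exp (-b * y ^ 2)) c).trans (integral_gaussian b)

lemma integral_gaussian_prod_sub (a b c d : ℝ) :
    ∫ z : ℝ × ℝ, exp (-(a * (z.1 - c) ^ 2 + b * (z.2 - d) ^ 2)) =
      √(π / a) * √(π / b) := by
  simp_rw [neg_add, exp_add, ← neg_mul]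
  rw [Measure.volume_eq_prod,
    integral_prod_mul (fun x ↦ exp (-a * (x - c) ^ 2)) fun y ↦ exp (-b * (y - d) ^ 2),
    integral_gaussian_sub, integral_gaussian_sub]

lemma norm_sq_KSHstate (α t P Q x p : ℝ) :
    ‖KSHstate α t P Q x p‖ ^ 2 =
      |sin (arctan α) / sin (arctan α + α * t)| / π *
        exp (-(sin (arctan α) * cos (α * t) * (x - Q) ^ 2
              + cos (arctan α) * sin (α * t) * (p - P) ^ 2) / sin (α * t + arctan α)) := by
  have h2S :
      2 * (sin (α * t + arctan α) : ℂ) = ((2 * sin (α * t + arctan α) : ℝ) : ℂ) := by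
    push_cast; ring
  simp only [KSHstate, h2S, norm_mul, Complex.norm_exp, Complex.div_ofReal_re,
    Complex.norm_cpow_eq_rpow_re_of_pos pi_pos, Complex.norm_real, Real.norm_eq_abs]
  have hre : ((-(cos (arctan α) * sin (α * t) : ℂ)) * ((p : ℂ) - P) ^ 2
      - (sin (arctan α) * cos (α * t) : ℂ) * ((x : ℂ) - Q) ^ 2
      - 2 * Complex.I * (cos (arctan α) * sin (α * t) : ℂ) * ((x : ℂ) - Q) * ((p : ℂ) - P)).re =
        -(sin (arctan α) * cos (α * t) * (x - Q) ^ 2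
          + cos (arctan α) * sin (α * t) * (p - P) ^ 2) := by
    simp only [sq, neg_mul, Complex.sub_re, Complex.neg_re, Complex.mul_re, Complex.ofReal_re,
      Complex.ofReal_im, mul_zero, sub_zero, Complex.sub_im, sub_self, Complex.mul_im, zero_mul,
      add_zero, Complex.re_ofNat, Complex.I_re, Complex.im_ofNat, Complex.I_im, mul_one, zero_add]
    ring
  have hphase : (-Complex.I * P * (x - Q)).re = 0 := by simp
  rw [hre, hphase, mul_pow, mul_pow, mul_pow, sq_abs, ← sqrt_eq_rpow, sq_sqrt (abs_nonneg _)]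
  have hpi : (π ^ (-(1 / 2 : ℂ)).re) ^ 2 = π⁻¹ := by
    norm_num [← rpow_natCast, ← rpow_mul pi_pos.le, rpow_neg_one]
  have hexp (y s : ℝ) : exp (y / (2 * s)) ^ 2 = exp (y / s) := by
    rw [← exp_nat_mul]
    ring_nf
  rw [hpi, hexp, exp_zero]
  ring

lemma sin_arctan_mul_sqrt_sin_two_mul {α : ℝ} (hα : 0 < α) (s : ℝ) :
    sin (arctan α) * √(sin (2 * s) / (2 * α)) =
      √(sin (arctan α) * cos s * (cos (arctan α) * sin s)) := by
  have htan : sin (arctan α) = α * cos (arctan α) := by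
    rw [sin_arctan, cos_arctan]
    ring
  have hsq : sin (arctan α) * cos s * (cos (arctan α) * sin s) =
      sin (arctan α) ^ 2 * (sin (2 * s) / (2 * α)) := by
    rw [sin_two_mul, htan]
    field_simp
  rw [hsq, sqrt_mul (sq_nonneg _), sqrt_sq (sin_arctan_nonneg.2 hα.le)]

/-- The transformed coherent state is normalized:
`∫_{ℝ²} |Φ(x,p)|² √(sin(2αt)/(2α)) dx dp = 1` for `t ∈ (0, π/(2α))`. -/
theorem statement7 (α t P Q : ℝ) (hα : 0 < α)
    (ht : t ∈ Set.Ioo 0 (π / (2 * α))) :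
    (∫ z : ℝ × ℝ,
        ‖KSHstate α t P Q z.1 z.2‖ ^ 2
          * Real.sqrt (Real.sin (2 * α * t) / (2 * α)))
      = 1 := by
  obtain ⟨ht0, htπ⟩ := ht
  simp_rw [norm_sq_KSHstate, add_comm (arctan α) (α * t)]
  set S := sin (α * t + arctan α)
  set A := cos (arctan α) * sin (α * t)
  set B := sin (arctan α) * cos (α * t)
  have hαt : α * t ∈ Set.Ioo 0 (π / 2) := by
    rw [lt_div_iff₀ (by positivity)] at htπ
    exact ⟨by positivity, by linarith⟩
  have hS : 0 < S :=
    sin_pos_of_pos_of_lt_pi (by linarith [arctan_pos.2 hα, hαt.1])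
      (by linarith [arctan_lt_pi_div_two α, hαt.2])
  have hA : 0 < A :=
    mul_pos (cos_arctan_pos α) (sin_pos_of_pos_of_lt_pi hαt.1 (by linarith [hαt.2, pi_pos]))
  have hB : 0 < B :=
    mul_pos (sin_arctan_pos.2 hα) (cos_pos_of_mem_Ioo ⟨by linarith [hαt.1, pi_pos], hαt.2⟩)
  have hexponent (u v : ℝ) :
      -(B * u ^ 2 + A * v ^ 2) / S = -(B / S * u ^ 2 + A / S * v ^ 2) := by
    ring
  have hgauss : √(π / (B / S)) * √(π / (A / S)) = π * S / √(B * A) := by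
    rw [← sqrt_mul (by positivity), show π / (B / S) * (π / (A / S)) = (π * S) ^ 2 / (B * A) by
      field_simp, sqrt_div (sq_nonneg _), sqrt_sq (by positivity)]
  have hnormalization : sin (arctan α) * √(sin (2 * α * t) / (2 * α)) = √(B * A) := by
    rw [mul_assoc 2 α t, sin_arctan_mul_sqrt_sin_two_mul hα]
  simp_rw [hexponent]
  rw [integral_mul_const, integral_const_mul, integral_gaussian_prod_sub, hgauss,
    abs_of_pos (div_pos (sin_arctan_pos.2 hα) hS)]
  calc _ = sin (arctan α) * √(sin (2 * α * t) / (2 * α)) / √(B * A) := by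
        field_simp
    _ = 1 := by rw [hnormalization, div_self (sqrt_pos.2 (mul_pos hB hA)).ne']
end

section
/- Let H(x,p) = (1/2)(H₁₁p² + 2H₁₂px + H₂₂x²) with H₁₁ ≠ 0. Set β = (1/2)log|H₁₁| and γ = (H₁₂/H₁₁)·(β/sinh β)·e^β (interpreted as γ = H₁₂·e^β·β/(H₁₁ sinh β), with the convention β/sinh β = 1 when β = 0). Then under the linear substitution x ↦ e^β x, p ↦ -(γ/β)sinh(β)x + e^{-β}p (again with sinh(β)/β = 1 when β = 0), the Hamiltonian H transforms into H₁(x,p) = (1/2)·sgn(H₁₁)·(p² + (H₁₁H₂₂ - H₁₂²)x²). -/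
open Real

/-- With `β = (1/2)log|H₁₁|`,
`γ = (H₁₂/H₁₁)(β/sinh β)e^β` (with `β/sinh β = 1` when `β = 0`), the substitution
`x ↦ e^β x`, `p ↦ -(γ/β)sinh(β)x + e^{-β}p` (with `sinh(β)/β = 1` when `β = 0`)
transforms `H = (1/2)(H₁₁p² + 2H₁₂px + H₂₂x²)` into
`H₁ = (1/2)·sgn(H₁₁)·(p² + (H₁₁H₂₂ - H₁₂²)x²)`. -/
theorem statement13 (H11 H12 H22 : ℝ) (h11 : H11 ≠ 0) :
    ∀ x p : ℝ,
      let β := (1/2) * Real.log |H11|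
      let γ := if β = 0 then H12 / H11
               else H12 / H11 * (β / Real.sinh β) * Real.exp β
      let x1 := Real.exp β * x
      let p1 := (if β = 0 then -γ else -(γ / β) * Real.sinh β) * x + Real.exp (-β) * p
      (1/2) * (H11 * p1 ^ 2 + 2 * H12 * p1 * x1 + H22 * x1 ^ 2)
        = (1/2) * Real.sign H11 * (p ^ 2 + (H11 * H22 - H12 ^ 2) * x ^ 2) := by
  intro x p β γ x1 p1
  have habs : 0 < |H11| := abs_pos.mpr h11
  have hE2 : Real.exp β * Real.exp β = |H11| := by
    rw [← Real.exp_add]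
    show Real.exp ((1/2) * Real.log |H11| + (1/2) * Real.log |H11|) = _
    rw [show (1/2) * Real.log |H11| + (1/2) * Real.log |H11| = Real.log |H11| by ring,
      Real.exp_log habs]
  have hEinv : Real.exp (-β) * Real.exp β = 1 := by
    rw [← Real.exp_add, neg_add_cancel, Real.exp_zero]
  have hp1 : p1 = -(H12 / H11) * Real.exp β * x + Real.exp (-β) * p := by
    show (if β = 0 then -γ else -(γ / β) * Real.sinh β) * x + Real.exp (-β) * p = _
    by_cases hβ : β = 0
    · simp only [hβ, if_true]
      have : γ = H12 / H11 := by simp [γ, hβ]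
      rw [this]
      simp
    · simp only [hβ, if_false]
      have hs : Real.sinh β ≠ 0 := by
        simp [Real.sinh_eq_zero, hβ]
      have hγ : γ = H12 / H11 * (β / Real.sinh β) * Real.exp β := by simp [γ, hβ]
      rw [hγ]
      field_simp
  rw [hp1]
  show (1/2) * (H11 * (-(H12 / H11) * Real.exp β * x + Real.exp (-β) * p) ^ 2
      + 2 * H12 * (-(H12 / H11) * Real.exp β * x + Real.exp (-β) * p) * (Real.exp β * x)
      + H22 * (Real.exp β * x) ^ 2) = _
  have hne : Real.exp β ≠ 0 := (Real.exp_pos β).ne'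
  rw [Real.exp_neg]
  rcases h11.lt_or_gt with hneg | hpos
  · rw [Real.sign_of_neg hneg]
    have habs' : |H11| = -H11 := abs_of_neg hneg
    have hH : H11 = -(Real.exp β * Real.exp β) := by rw [hE2, habs']; ring
    rw [hH]
    field_simp
    ring
  · rw [Real.sign_of_pos hpos]
    have habs' : |H11| = H11 := abs_of_pos hpos
    have hH : H11 = Real.exp β * Real.exp β := by rw [hE2, habs']
    rw [hH]
    field_simp
    ring
end

section
/- Let α > 0, θ = arctan α, t ∈ ℝ with π/(2α) < t < π/α (so sin(2αt) < 0). Then the Gaussian-type function Φ(x,p) = exp( ( -cos θ sin(αt)(p-P)² - sin θ cos(αt)(x-Q)² ) / (2 sin(αt+θ)) ) is not integrable over ℝ² whenever sin(αt+θ) ≠ 0: at least one of the two quadratic coefficients cos θ sin(αt)/sin(αt+θ), sin θ cos(αt)/sin(αt+θ) is ≤ 0, so ∫_{ℝ²} Φ(x,p)² dx dp = +∞. -/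
open Real MeasureTheory ENNReal

private lemma gaussMeas (c P : ℝ) :
    Measurable (fun x : ℝ => ENNReal.ofReal (Real.exp (c * (x - P) ^ 2))) := by
  exact (Real.measurable_exp.comp
    ((((measurable_id.sub_const P).pow_const 2).const_mul c))).ennreal_ofReal

private lemma lintTop (c P : ℝ) (hc : 0 ≤ c) :
    ∫⁻ x : ℝ, ENNReal.ofReal (Real.exp (c * (x - P) ^ 2)) = ⊤ := by
  have hle : ∀ x : ℝ, (1 : ℝ≥0∞) ≤ ENNReal.ofReal (Real.exp (c * (x - P) ^ 2)) := by
    intro x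
    rw [← ENNReal.ofReal_one]
    exact ENNReal.ofReal_le_ofReal
      (Real.one_le_exp (mul_nonneg hc (sq_nonneg _)))
  have h1 : (∫⁻ _ : ℝ, (1 : ℝ≥0∞)) = ⊤ := by
    simp [lintegral_const]
  refine top_le_iff.mp ?_
  rw [← h1]
  exact lintegral_mono hle

private lemma lintPos (c P : ℝ) :
    0 < ∫⁻ x : ℝ, ENNReal.ofReal (Real.exp (c * (x - P) ^ 2)) := by
  rw [lintegral_pos_iff_support (gaussMeas c P)]
  have : (Function.support fun x : ℝ => ENNReal.ofReal (Real.exp (c * (x - P) ^ 2)))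
      = Set.univ := by
    ext x
    simp [Function.mem_support, ne_of_gt (ENNReal.ofReal_pos.mpr (Real.exp_pos _))]
  rw [this]
  simp

/-- In the anti-Kähler region `π/(2α) < t < π/α`, with
`θ = arctan α` and `sin(αt+θ) ≠ 0`, at least one of the quadratic coefficients
`cos θ sin(αt)/sin(αt+θ)`, `sin θ cos(αt)/sin(αt+θ)` is `≤ 0`, and the
Gaussian-type function
`Φ(x,p) = exp((-cos θ sin(αt)(p-P)² - sin θ cos(αt)(x-Q)²)/(2 sin(αt+θ)))`
has `∫_{ℝ²} Φ² = +∞`. -/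
theorem statement17 (α t P Q : ℝ) (hα : 0 < α)
    (ht : π / (2 * α) < t ∧ t < π / α)
    (hsin : Real.sin (α * t + Real.arctan α) ≠ 0) :
    (Real.cos (Real.arctan α) * Real.sin (α * t) / Real.sin (α * t + Real.arctan α) ≤ 0
      ∨ Real.sin (Real.arctan α) * Real.cos (α * t) / Real.sin (α * t + Real.arctan α) ≤ 0)
    ∧ (∫⁻ z : ℝ × ℝ,
        ENNReal.ofReal
          (Real.exp ((-(Real.cos (Real.arctan α) * Real.sin (α * t) * (z.2 - P) ^ 2)
              - Real.sin (Real.arctan α) * Real.cos (α * t) * (z.1 - Q) ^ 2)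
            / (2 * Real.sin (α * t + Real.arctan α))) ^ 2)) = ⊤ := by
  obtain ⟨ht1, ht2⟩ := ht
  set θ := Real.arctan α with hθdef
  have hθ1 : 0 < θ := by
    have := Real.arctan_strictMono hα
    rwa [Real.arctan_zero] at this
  have hθ2 : θ < π / 2 := Real.arctan_lt_pi_div_two α
  have hpi := Real.pi_pos
  have hcθ : 0 < Real.cos θ := Real.cos_pos_of_mem_Ioo ⟨by linarith, hθ2⟩
  have hsθ : 0 < Real.sin θ := Real.sin_pos_of_pos_of_lt_pi hθ1 (by linarith)
  have hαt1 : π / 2 < α * t := by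
    have := mul_lt_mul_of_pos_left ht1 hα
    have h2 : α * (π / (2 * α)) = π / 2 := by
      field_simp
    linarith
  have hαt2 : α * t < π := by
    have := mul_lt_mul_of_pos_left ht2 hα
    rw [mul_div_cancel₀ _ (ne_of_gt hα)] at this
    exact this
  have hsat : 0 < Real.sin (α * t) :=
    Real.sin_pos_of_pos_of_lt_pi (by linarith) hαt2
  have hcat : Real.cos (α * t) < 0 :=
    Real.cos_neg_of_pi_div_two_lt_of_lt hαt1 (by linarith)
  set a := Real.cos θ * Real.sin (α * t) with hadef
  set b := Real.sin θ * Real.cos (α * t) with hbdef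
  set S := Real.sin (α * t + θ) with hSdef
  have ha : 0 < a := mul_pos hcθ hsat
  have hb : b < 0 := mul_neg_of_pos_of_neg hsθ hcat
  have key : ∀ z : ℝ × ℝ,
      ENNReal.ofReal
        (Real.exp ((-(a * (z.2 - P) ^ 2) - b * (z.1 - Q) ^ 2) / (2 * S)) ^ 2)
      = ENNReal.ofReal (Real.exp (-(b / S) * (z.1 - Q) ^ 2))
        * ENNReal.ofReal (Real.exp (-(a / S) * (z.2 - P) ^ 2)) := by
    intro z
    rw [← ENNReal.ofReal_mul (Real.exp_nonneg _), ← Real.exp_add, sq, ← Real.exp_add]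
    congr 1
    field_simp
    ring
  simp_rw [key]
  rw [MeasureTheory.Measure.volume_eq_prod,
    lintegral_prod_mul (gaussMeas (-(b / S)) Q).aemeasurable
      (gaussMeas (-(a / S)) P).aemeasurable]
  rcases lt_or_gt_of_ne hsin with hS | hS
  · refine ⟨Or.inl (le_of_lt (div_neg_of_pos_of_neg ha hS)), ?_⟩
    rw [lintTop (-(a / S)) P (le_of_lt (by have := div_neg_of_pos_of_neg ha hS; linarith))]
    exact ENNReal.mul_top (ne_of_gt (lintPos (-(b / S)) Q))
  · refine ⟨Or.inr (le_of_lt (div_neg_of_neg_of_pos hb hS)), ?_⟩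
    rw [lintTop (-(b / S)) Q (le_of_lt (by have := div_neg_of_neg_of_pos hb hS; linarith))]
    exact ENNReal.top_mul (ne_of_gt (lintPos (-(a / S)) P))
end

section
/- Let α > 0, θ = arctan α, t ∈ (0, π/(2α)), P, Q ∈ ℝ, and b = α cot(θ + αt). With P_t = cos(αt)P + iα sin(αt)Q, Q_t = (i/α)sin(αt)P + cos(αt)Q, and w = cos(αt)x + (i/α)sin(αt)p, the following identity of functions of (x,p) ∈ ℝ² holds: -iP_t(w - Q_t) - (b/2)(w - Q_t)² + C(t,P,Q) = -iP(x-Q) + ( -cos θ sin(αt)(p-P)² - sin θ cos(αt)(x-Q)² - 2i cos θ sin(αt)(x-Q)(p-P) )/(2 sin(αt+θ)), where C(t,P,Q) = -∫₀ᵗ (L_H(p_{is},x_{is}) - L_H(P_{is},Q_{is})) ds is evaluated using L_H(p,x)=(1/2)(p²+α²x²), p_{is},x_{is} the complexified flow applied to (p,x), and the explicit formula ∫₀ᵗ L_H(P_{is},Q_{is})ds = (1/(4α))sin(2αt)(P²+α²Q²) + i sin²(αt)PQ. -/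
/-!
Along the complexified flow the Lagrangian is `(p² + α²x²)/2 · cos 2αs + iαpx · sin 2αs`,
so the action integral in `C` has the same closed form as the one given for `(P, Q)`.
Since `tan θ = α`, `sin(θ + αt) = cos θ (sin αt + α cos αt)` and
`cos(θ + αt) = cos θ (cos αt - α sin αt)`. After these substitutions the identity is
polynomial in `cos αt`, `sin αt` and `i`, and holds modulo `sin² + cos² = 1` and `i² = -1`.
-/

open Real MeasureTheory intervalIntegral

/-- `L_H(p_{is}, x_{is})`: the Lagrangian `L_H(p, x) = (p² + α²x²)/2` along the complexified
harmonic flow started at `(p, x)`. -/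
noncomputable def complexFlowLagrangian (α s p x : ℝ) : ℂ :=
  (1 / 2 : ℂ) *
    (((Real.cos (α * s) : ℂ) * p + Complex.I * α * Real.sin (α * s) * x) ^ 2
      + (α : ℂ) ^ 2
        * ((Complex.I / α) * Real.sin (α * s) * p + (Real.cos (α * s) : ℂ) * x) ^ 2)

noncomputable def complexFlowAction (α t p x : ℝ) : ℂ :=
  ((1 / (4 * α) * Real.sin (2 * α * t) * (p ^ 2 + α ^ 2 * x ^ 2) : ℝ) : ℂ)
    + Complex.I * (Real.sin (α * t) ^ 2 * p * x : ℝ)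

theorem complexFlowAction_eq (α t p x : ℝ) :
    complexFlowAction α t p x
      = (Real.sin (α * t) : ℂ) * Real.cos (α * t) / (2 * α)
          * ((p : ℂ) ^ 2 + (α : ℂ) ^ 2 * x ^ 2)
        + Complex.I * ((Real.sin (α * t) : ℂ) ^ 2 * p * x) := by
  rw [complexFlowAction, mul_assoc 2 α t, Real.sin_two_mul]
  push_cast
  ring

theorem complexFlowLagrangian_eq (α s p x : ℝ) (hα : α ≠ 0) :
    complexFlowLagrangian α s p x
      = (((p ^ 2 + α ^ 2 * x ^ 2) / 2 * Real.cos (2 * α * s) : ℝ) : ℂ)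
        + ((α * p * x * Real.sin (2 * α * s) : ℝ) : ℂ) * Complex.I := by
  have hα' : (α : ℂ) ≠ 0 := by exact_mod_cast hα
  rw [complexFlowLagrangian, mul_assoc 2 α s, Real.cos_two_mul, Real.sin_two_mul]
  push_cast
  field_simp
  linear_combination ((p : ℂ) ^ 2 + (α : ℂ) ^ 2 * x ^ 2)
    * (Complex.sin (α * s) ^ 2 * Complex.I_sq - Complex.sin_sq_add_cos_sq (α * s))

theorem integral_cos_two_mul (α t : ℝ) (hα : α ≠ 0) :
    ∫ s in (0 : ℝ)..t, Real.cos (2 * α * s) = Real.sin (2 * α * t) / (2 * α) := by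
  rw [integral_comp_mul_left Real.cos (mul_ne_zero two_ne_zero hα), integral_cos,
    mul_zero, Real.sin_zero, sub_zero, smul_eq_mul, inv_mul_eq_div]

theorem integral_sin_two_mul (α t : ℝ) (hα : α ≠ 0) :
    ∫ s in (0 : ℝ)..t, Real.sin (2 * α * s) = Real.sin (α * t) ^ 2 / α := by
  rw [integral_comp_mul_left Real.sin (mul_ne_zero two_ne_zero hα), integral_sin,
    mul_zero, Real.cos_zero, mul_assoc 2 α t, Real.cos_two_mul, smul_eq_mul]
  field_simp
  linear_combination -2 * Real.sin_sq_add_cos_sq (α * t)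

theorem integral_complexFlowLagrangian (α t p x : ℝ) (hα : α ≠ 0) :
    ∫ s in (0 : ℝ)..t, complexFlowLagrangian α s p x = complexFlowAction α t p x := by
  have hα' : (α : ℂ) ≠ 0 := by exact_mod_cast hα
  simp only [complexFlowLagrangian_eq α _ p x hα]
  rw [intervalIntegral.integral_add (by apply Continuous.intervalIntegrable; fun_prop)
      (by apply Continuous.intervalIntegrable; fun_prop),
    intervalIntegral.integral_mul_const, intervalIntegral.integral_ofReal,
    intervalIntegral.integral_ofReal, intervalIntegral.integral_const_mul,
    intervalIntegral.integral_const_mul,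
    integral_cos_two_mul α t hα, integral_sin_two_mul α t hα, complexFlowAction]
  push_cast
  field_simp
  ring

open Complex in
/-- With `c = cos αt`, `s = sin αt`, `a = tan θ` and `k = cos θ`: expanding around `(Q, P)`, the
terms linear in `(x - Q, p - P)` collapse to `-iP(x - Q)` because `s² + c² = 1`, and the quadratic
ones agree coefficientwise. -/
theorem exponent_identity (a c s k P Q x p : ℂ) (hcs : s ^ 2 + c ^ 2 = 1) (ha : a ≠ 0)
    (hk : k ≠ 0) (hd : s + a * c ≠ 0) :
    -I * (c * P + I * a * s * Q) * ((c * x + I / a * s * p) - (I / a * s * P + c * Q))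
      - a * (k * (c - a * s)) / (k * (s + a * c)) / 2
          * ((c * x + I / a * s * p) - (I / a * s * P + c * Q)) ^ 2
      + -((s * c / (2 * a) * (p ^ 2 + a ^ 2 * x ^ 2) + I * (s ^ 2 * p * x))
          - (s * c / (2 * a) * (P ^ 2 + a ^ 2 * Q ^ 2) + I * (s ^ 2 * P * Q)))
      = -I * P * (x - Q) + (-(k * s) * (p - P) ^ 2 - a * k * c * (x - Q) ^ 2
          - 2 * I * (k * s) * (x - Q) * (p - P)) / (2 * (k * (s + a * c))) := by
  have hd' : s + c * a ≠ 0 := by rwa [mul_comm]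
  field_simp
  linear_combination
    (-a * (s * (p - P) ^ 2 + a * c * (x - Q) ^ 2 + 2 * I * (x - Q) * (s * p + a * c * P))) * hcs
    + (a * s ^ 3 * (p - P) ^ 2 - c * s ^ 2 * (p ^ 2 - P ^ 2) - 2 * a * c ^ 2 * s * P * (p - P)
        - 2 * a * s * Q * (s + a * c) * (a * c * (x - Q) + I * s * (p - P))) * I_sq

theorem sin_arctan_eq_mul_cos_arctan (α : ℝ) :
    Real.sin (arctan α) = α * Real.cos (arctan α) := by
  rw [← tan_mul_cos (cos_arctan_pos α).ne', tan_arctan]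

theorem sin_add_arctan (u α : ℝ) :
    Real.sin (u + arctan α) = Real.cos (arctan α) * (Real.sin u + α * Real.cos u) := by
  rw [Real.sin_add, sin_arctan_eq_mul_cos_arctan]
  ring

theorem cos_add_arctan (u α : ℝ) :
    Real.cos (u + arctan α) = Real.cos (arctan α) * (Real.cos u - α * Real.sin u) := by
  rw [Real.cos_add, sin_arctan_eq_mul_cos_arctan]
  ring

/-- The exponent identity of Theorem 4.1(c): for `θ = arctan α`,
`t ∈ (0, π/(2α))`, `b = α cot(θ+αt)`, `P_t, Q_t` the complexified flow applied
to `(P,Q)`, `w = cos(αt)x + (i/α)sin(αt)p`, and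
`C = -∫₀ᵗ (L_H(p_{is},x_{is}) - L_H(P_{is},Q_{is})) ds` (with the second term
given by the explicit formula `(1/(4α))sin(2αt)(P²+α²Q²) + i sin²(αt)PQ`), one
has, as functions of `(x,p) ∈ ℝ²`:
`-iP_t(w-Q_t) - (b/2)(w-Q_t)² + C
  = -iP(x-Q) + (-cosθ sin(αt)(p-P)² - sinθ cos(αt)(x-Q)²
      - 2i cosθ sin(αt)(x-Q)(p-P))/(2 sin(αt+θ))`. -/
theorem statement19 (α t P Q : ℝ) (hα : 0 < α)
    (ht : t ∈ Set.Ioo 0 (π / (2 * α))) :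
    ∀ x p : ℝ,
      let θ := Real.arctan α
      let b : ℂ := (α * Real.cos (θ + α * t) / Real.sin (θ + α * t) : ℝ)
      let Pt : ℂ := (Real.cos (α * t) : ℂ) * P + Complex.I * α * Real.sin (α * t) * Q
      let Qt : ℂ := (Complex.I / α) * Real.sin (α * t) * P + (Real.cos (α * t) : ℂ) * Q
      let w : ℂ := (Real.cos (α * t) : ℂ) * x + (Complex.I / α) * Real.sin (α * t) * p
      let C : ℂ :=
        -((∫ s in (0:ℝ)..t,
            (1 / 2 : ℂ) *
              (((Real.cos (α * s) : ℂ) * p + Complex.I * α * Real.sin (α * s) * x) ^ 2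
                + (α : ℂ) ^ 2 *
                  ((Complex.I / α) * Real.sin (α * s) * p
                    + (Real.cos (α * s) : ℂ) * x) ^ 2))
          - (((1 / (4 * α) * Real.sin (2 * α * t) * (P ^ 2 + α ^ 2 * Q ^ 2) : ℝ) : ℂ)
              + Complex.I * (Real.sin (α * t) ^ 2 * P * Q : ℝ)))
      (-Complex.I * Pt * (w - Qt) - (b / 2) * (w - Qt) ^ 2 + C
        = -Complex.I * P * ((x : ℂ) - Q)
          + (-(Real.cos θ * Real.sin (α * t) : ℂ) * ((p : ℂ) - P) ^ 2
              - (Real.sin θ * Real.cos (α * t) : ℂ) * ((x : ℂ) - Q) ^ 2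
              - 2 * Complex.I * (Real.cos θ * Real.sin (α * t) : ℂ)
                  * ((x : ℂ) - Q) * ((p : ℂ) - P))
            / (2 * (Real.sin (α * t + θ) : ℂ))) := by
  intro x p θ b Pt Qt w C
  have hαt : α * t < π / 2 := by
    have := (lt_div_iff₀ (by positivity)).1 ht.2
    linarith
  have hd : 0 < Real.sin (α * t) + α * Real.cos (α * t) :=
    add_pos (Real.sin_pos_of_pos_of_lt_pi (mul_pos hα ht.1) (by linarith [pi_pos]))
      (mul_pos hα (Real.cos_pos_of_mem_Ioo ⟨by linarith [pi_pos, mul_pos hα ht.1], hαt⟩))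
  have hC : C = -(complexFlowAction α t p x - complexFlowAction α t P Q) := by
    rw [← integral_complexFlowLagrangian α t p x hα.ne']
    rfl
  have hb : b = α * (Real.cos θ * (Real.cos (α * t) - α * Real.sin (α * t)))
      / (Real.cos θ * (Real.sin (α * t) + α * Real.cos (α * t))) := by
    simp only [b, θ, add_comm (arctan α) (α * t), sin_add_arctan, cos_add_arctan]
    push_cast
    ring
  have hsin : (Real.sin (α * t + θ) : ℂ)
      = Real.cos θ * (Real.sin (α * t) + α * Real.cos (α * t)) := by
    exact_mod_cast sin_add_arctan (α * t) α
  have hsθ : (Real.sin θ : ℂ) = α * Real.cos θ := by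
    exact_mod_cast sin_arctan_eq_mul_cos_arctan α
  rw [hC, hb, hsin, hsθ, complexFlowAction_eq, complexFlowAction_eq]
  exact exponent_identity _ _ _ _ _ _ _ _ (by exact_mod_cast Real.sin_sq_add_cos_sq (α * t))
    (by exact_mod_cast hα.ne') (by exact_mod_cast (cos_arctan_pos α).ne')
    (by exact_mod_cast hd.ne')
end
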